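/- For every subset U of [n] and every x in D_U(n), the transitive closure cl(x) belongs to A_U(n); consequently cl(x) is the least element of A_U(n) containing x. -/

import Mathlib

/-- `J_n = {(i,j) : 1 ≤ i < j ≤ n}`. -/
def JnS (n : ℕ) : Set (ℕ × ℕ) := {p | 1 ≤ p.1 ∧ p.1 < p.2 ∧ p.2 ≤ n}

/-- Transitivity of a set of pairs, viewed as a binary relation. -/
def TransSet (x : Set (ℕ × ℕ)) : Prop := ∀ i j k : ℕ, (i, j) ∈ x → (j, k) ∈ x → (i, k) ∈ x

/-- `D_U(n)`: subsets `x ⊆ J_n` such that whenever `i < j < k` and `(i,k) ∈ x`,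
then `(i,j) ∈ x` if `j ∈ U` and `(j,k) ∈ x` if `j ∉ U`. -/
def DUset (n : ℕ) (U : Set ℕ) (x : Set (ℕ × ℕ)) : Prop :=
  x ⊆ JnS n ∧ ∀ i j k : ℕ, i < j → j < k → (i, k) ∈ x →
    ((j ∈ U → (i, j) ∈ x) ∧ (j ∉ U → (j, k) ∈ x))

/-- `A_U(n)`: the transitive members of `D_U(n)`. -/
def AUset (n : ℕ) (U : Set ℕ) (x : Set (ℕ × ℕ)) : Prop := DUset n U x ∧ TransSet x

/-- The transitive closure of a set of pairs. -/
def clS (x : Set (ℕ × ℕ)) : Set (ℕ × ℕ) :=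
  {p | Relation.TransGen (fun a b => (a, b) ∈ x) p.1 p.2}

/-! Let `(i, k) ∈ cl x` be witnessed by a chain `i → b → ⋯ → k` of steps in `x`, and let
`i < j < k`. If `j < b`, the `D_U` condition for the step `(i, b)` gives
`(i, j) ∈ x` or `(j, b) ∈ x`, and the latter extends along the chain to `(j, k)`; if `j = b` both
conclusions hold; if `j > b`, induction on the shorter chain from `b` gives `(b, j)`, which `(i, b)`
extends to `(i, j)`, or directly `(j, k)`. So `cl x ∈ D_U(n)`, and it is transitive and smallest. -/

lemma subset_clS (x : Set (ℕ × ℕ)) : x ⊆ clS x :=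
  fun _ hp => Relation.TransGen.single hp

lemma transSet_clS (x : Set (ℕ × ℕ)) : TransSet (clS x) :=
  fun _ _ _ => Relation.TransGen.trans

lemma clS_subset_of_transSet {x y : Set (ℕ × ℕ)} (hxy : x ⊆ y) (hy : TransSet y) :
    clS x ⊆ y := by
  rintro ⟨i, k⟩ (h : Relation.TransGen _ i k)
  induction h with
  | single h => exact hxy h
  | tail _ h ih => exact hy _ _ _ ih (hxy h)

lemma clS_subset_JnS {n : ℕ} {x : Set (ℕ × ℕ)} (hx : x ⊆ JnS n) : clS x ⊆ JnS n := by
  rintro ⟨i, k⟩ (h : Relation.TransGen _ i k)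
  induction h with
  | single h => exact hx h
  | tail _ h ih => exact ⟨ih.1, ih.2.1.trans (hx h).2.1, (hx h).2.2⟩

theorem DUset.clS {n : ℕ} {U : Set ℕ} {x : Set (ℕ × ℕ)} (hx : DUset n U x) :
    DUset n U (clS x) := by
  refine ⟨clS_subset_JnS hx.1, fun i j k hij hjk (h : Relation.TransGen _ i k) => ?_⟩
  induction h using Relation.TransGen.head_induction_on generalizing j with
  | single hik =>
    exact ⟨fun hj => .single ((hx.2 _ j k hij hjk hik).1 hj),
      fun hj => .single ((hx.2 _ j k hij hjk hik).2 hj)⟩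
  | @head i b hib hbk ih =>
    rcases lt_trichotomy j b with hjb | rfl | hbj
    · exact ⟨fun hj => .single ((hx.2 i j b hij hjb hib).1 hj),
        fun hj => .head ((hx.2 i j b hij hjb hib).2 hj) hbk⟩
    · exact ⟨fun _ => .single hib, fun _ => hbk⟩
    · exact ⟨fun hj => .head hib ((ih j hbj hjk).1 hj), (ih j hbj hjk).2⟩

theorem stmt8_general (n : ℕ) (U : Set ℕ)
    (x : Set (ℕ × ℕ)) (hx : DUset n U x) :
    AUset n U (clS x) ∧ IsLeast {y | AUset n U y ∧ x ⊆ y} (clS x) := by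
  have hA : AUset n U (clS x) := ⟨hx.clS, transSet_clS x⟩
  exact ⟨hA, ⟨hA, subset_clS x⟩, fun y hy => clS_subset_of_transSet hy.2 hy.1.2⟩

/-- For every `U ⊆ [n]` and every `x ∈ D_U(n)`, the transitive closure `cl x` belongs
to `A_U(n)`; consequently `cl x` is the least element of `A_U(n)` containing `x`. -/
theorem stmt8 (n : ℕ) (U : Set ℕ) (hUn : U ⊆ Set.Icc 1 n)
    (x : Set (ℕ × ℕ)) (hx : DUset n U x) :
    AUset n U (clS x) ∧ IsLeast {y | AUset n U y ∧ x ⊆ y} (clS x) :=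
  stmt8_general n U x hx
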